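/- Let Ṽ be the normalised wood-lemming operator, defined for (x₁,x₂,x₃,u) with α := x₁+x₂+x₃ > 0 by Ṽ(x₁,x₂,x₃,u) = ( (2x₁+x₂)/(4α), (x₂+2x₃)/(4α), (x₂+2x₃)/(4α), (2x₁+x₂)/(4α) ), and let R = {(x₁,x₂,x₃,u) ∈ S^{3,1} : x₁ ≠ 0 or x₂ ≠ 0}; R is invariant under Ṽ. Then for every initial point s = (x₁⁽⁰⁾,x₂⁽⁰⁾,x₃⁽⁰⁾,u⁽⁰⁾) ∈ R, the sequence Ṽ^k(s) converges as k → ∞, with limit (1/2, 0, 0, 1/2) if x₂⁽⁰⁾ = x₃⁽⁰⁾ = 0, and limit (1/4, 1/4, 1/4, 1/4) otherwise. -/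
import Mathlib


/-- The normalised wood-lemming gonosomal operator. -/
noncomputable def nWoodOp (p : ℝ × ℝ × ℝ × ℝ) : ℝ × ℝ × ℝ × ℝ :=
  ((2 * p.1 + p.2.1) / (4 * (p.1 + p.2.1 + p.2.2.1)),
   (p.2.1 + 2 * p.2.2.1) / (4 * (p.1 + p.2.1 + p.2.2.1)),
   (p.2.1 + 2 * p.2.2.1) / (4 * (p.1 + p.2.1 + p.2.2.1)),
   (2 * p.1 + p.2.1) / (4 * (p.1 + p.2.1 + p.2.2.1)))

/-- The set `S^{3,1}` of frequency distributions. -/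
def S31 : Set (ℝ × ℝ × ℝ × ℝ) :=
  {p | 0 ≤ p.1 ∧ 0 ≤ p.2.1 ∧ 0 ≤ p.2.2.1 ∧ 0 ≤ p.2.2.2 ∧
       0 < p.1 + p.2.1 + p.2.2.1 ∧ 0 < p.2.2.2 ∧
       p.1 + p.2.1 + p.2.2.1 + p.2.2.2 = 1}

lemma nWood_fix : nWoodOp ((1:ℝ)/2, 0, 0, 1/2) = ((1:ℝ)/2, 0, 0, 1/2) := by
  norm_num [nWoodOp]

lemma nWood_step (b : ℝ) (h1 : 0 < b) (h2 : b < 1/2) :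
    nWoodOp (1/2 - b, b, b, 1/2 - b) =
      (1/2 - 3*b/(2+4*b), 3*b/(2+4*b), 3*b/(2+4*b), 1/2 - 3*b/(2+4*b)) := by
  have hd : (2:ℝ) + 4*b ≠ 0 := by positivity
  have h4 : (4:ℝ) * ((1/2 - b) + b + b) = 2 + 4*b := by ring
  simp only [nWoodOp, Prod.mk.injEq]
  rw [h4]
  refine ⟨?_, ?_, ?_, ?_⟩ <;> rw [div_eq_iff hd] <;> field_simp <;> ring

lemma w_gt_two (b₁ : ℝ) (h1 : 0 < b₁) (h2 : b₁ < 1/2) (k : ℕ) :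
    2 < 4 + (2/3:ℝ)^k * (1/b₁ - 4) := by
  have hp : (0:ℝ) < (2/3:ℝ)^k := by positivity
  have hle : ((2:ℝ)/3)^k ≤ 1 := pow_le_one₀ (by norm_num) (by norm_num)
  have hw : 2 < 1/b₁ := by rw [lt_div_iff₀ h1]; linarith
  nlinarith

lemma nWood_closed (b₁ : ℝ) (h1 : 0 < b₁) (h2 : b₁ < 1/2) (k : ℕ) :
    nWoodOp^[k] (1/2 - b₁, b₁, b₁, 1/2 - b₁) =
      (1/2 - 1/(4 + (2/3:ℝ)^k * (1/b₁ - 4)), 1/(4 + (2/3:ℝ)^k * (1/b₁ - 4)),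
       1/(4 + (2/3:ℝ)^k * (1/b₁ - 4)), 1/2 - 1/(4 + (2/3:ℝ)^k * (1/b₁ - 4))) := by
  induction k with
  | zero =>
      simp only [Function.iterate_zero, id_eq, pow_zero, one_mul]
      have hb : b₁ ≠ 0 := ne_of_gt h1
      have : 4 + (1/b₁ - 4) = 1/b₁ := by ring
      rw [this, one_div_one_div]
  | succ k ih =>
      set g : ℝ := 4 + (2/3:ℝ)^k * (1/b₁ - 4) with hg
      have hg2 : 2 < g := w_gt_two b₁ h1 h2 k
      have hg0 : g ≠ 0 := by linarith
      have hb0 : (0:ℝ) < 1/g := by positivity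
      have hb2 : 1/g < 1/2 := by
        rw [div_lt_div_iff₀ (by linarith) (by norm_num)]; linarith
      rw [Function.iterate_succ_apply', ih, nWood_step (1/g) hb0 hb2]
      have hden : (2:ℝ) + 4 * (1/g) ≠ 0 := by positivity
      have hg' : (4:ℝ) + (2/3:ℝ)^(k+1) * (1/b₁ - 4) = (2*g + 4)/3 := by
        rw [hg]; ring
      have hg'0 : (4:ℝ) + (2/3:ℝ)^(k+1) * (1/b₁ - 4) ≠ 0 := by
        rw [hg']; intro h
        have : 2*g + 4 = 0 := by
          field_simp at h; linarith
        linarith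
      have h24 : (2:ℝ)*g + 4 ≠ 0 := by linarith
      have key : 3 * (1/g) / (2 + 4 * (1/g)) = 1/(4 + (2/3:ℝ)^(k+1) * (1/b₁ - 4)) := by
        rw [hg']
        field_simp
      rw [key]

theorem nWoodOp_limit (s : ℝ × ℝ × ℝ × ℝ)
    (hs : s ∈ {q ∈ S31 | q.1 ≠ 0 ∨ q.2.1 ≠ 0}) :
    (s.2.1 = 0 ∧ s.2.2.1 = 0 →
      Filter.Tendsto (fun k => nWoodOp^[k] s) Filter.atTop
        (nhds ((1 : ℝ) / 2, (0 : ℝ), (0 : ℝ), (1 : ℝ) / 2))) ∧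
    (¬(s.2.1 = 0 ∧ s.2.2.1 = 0) →
      Filter.Tendsto (fun k => nWoodOp^[k] s) Filter.atTop
        (nhds ((1 : ℝ) / 4, (1 : ℝ) / 4, (1 : ℝ) / 4, (1 : ℝ) / 4))) := by
  obtain ⟨x₁, x₂, x₃, u⟩ := s
  obtain ⟨⟨hx1, hx2, hx3, hu, hα, hu0, hsum⟩, hR⟩ := hs
  simp only at hx1 hx2 hx3 hu hα hu0 hsum hR ⊢
  have hα0 : x₁ + x₂ + x₃ ≠ 0 := ne_of_gt hα
  have ha1 : 0 < 2 * x₁ + x₂ := by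
    rcases hR with h | h
    · have := lt_of_le_of_ne hx1 (Ne.symm h); linarith
    · have := lt_of_le_of_ne hx2 (Ne.symm h); linarith
  constructor
  · rintro ⟨h2, h3⟩
    subst h2; subst h3
    have hfirst : nWoodOp (x₁, 0, 0, u) = ((1:ℝ)/2, 0, 0, 1/2) := by
      have hx1' : x₁ ≠ 0 := by intro h; rw [h] at hα; norm_num at hα
      simp only [nWoodOp, Prod.mk.injEq]
      refine ⟨?_, ?_, ?_, ?_⟩ <;> field_simp <;> ring
    have hconst : ∀ k, nWoodOp^[k+1] (x₁, 0, 0, u) = ((1:ℝ)/2, 0, 0, 1/2) := by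
      intro k
      induction k with
      | zero => simpa using hfirst
      | succ k ih => rw [Function.iterate_succ_apply', ih, nWood_fix]
    rw [← Filter.tendsto_add_atTop_iff_nat 1]
    simp only [hconst]
    exact tendsto_const_nhds
  · intro hne
    -- after one step the point is (1/2 - b₁, b₁, b₁, 1/2 - b₁) with 0 < b₁ < 1/2
    set b₁ : ℝ := (x₂ + 2 * x₃) / (4 * (x₁ + x₂ + x₃)) with hb₁
    have hnum : 0 < x₂ + 2 * x₃ := by
      by_contra h
      push_neg at h
      have h2 : x₂ = 0 := by linarith
      have h3 : x₃ = 0 := by linarith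
      exact hne ⟨h2, h3⟩
    have hb1pos : 0 < b₁ := by positivity
    have hb1lt : b₁ < 1/2 := by
      rw [hb₁, div_lt_div_iff₀ (by positivity) (by norm_num)]
      linarith
    have hA : (2 * x₁ + x₂) / (4 * (x₁ + x₂ + x₃)) = 1/2 - b₁ := by
      rw [hb₁, eq_sub_iff_add_eq, div_add_div _ _ (by positivity) (by positivity),
        div_eq_div_iff (by positivity) (by norm_num)]
      ring
    have hfirst : nWoodOp (x₁, x₂, x₃, u) = (1/2 - b₁, b₁, b₁, 1/2 - b₁) := by
      simp only [nWoodOp]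
      rw [hA, ← hb₁]
    rw [← Filter.tendsto_add_atTop_iff_nat 1]
    have hform : ∀ k : ℕ, nWoodOp^[k+1] (x₁, x₂, x₃, u) =
        (1/2 - 1/(4 + (2/3:ℝ)^k * (1/b₁ - 4)), 1/(4 + (2/3:ℝ)^k * (1/b₁ - 4)),
         1/(4 + (2/3:ℝ)^k * (1/b₁ - 4)), 1/2 - 1/(4 + (2/3:ℝ)^k * (1/b₁ - 4))) := by
      intro k
      rw [Function.iterate_succ_apply, hfirst, nWood_closed b₁ hb1pos hb1lt k]
    simp only [hform]
    have h23 : Filter.Tendsto (fun k : ℕ => ((2:ℝ)/3)^k) Filter.atTop (nhds 0) :=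
      tendsto_pow_atTop_nhds_zero_of_lt_one (by norm_num) (by norm_num)
    have hg : Filter.Tendsto (fun k : ℕ => 4 + (2/3:ℝ)^k * (1/b₁ - 4)) Filter.atTop
        (nhds 4) := by
      have := (h23.mul_const ((1:ℝ)/b₁ - 4)).const_add (4:ℝ)
      simpa using this
    have hb : Filter.Tendsto (fun k : ℕ => 1/(4 + (2/3:ℝ)^k * (1/b₁ - 4))) Filter.atTop
        (nhds ((1:ℝ)/4)) := by
      have := hg.inv₀ (by norm_num)
      simpa [one_div] using this
    have ha : Filter.Tendsto (fun k : ℕ => 1/2 - 1/(4 + (2/3:ℝ)^k * (1/b₁ - 4)))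
        Filter.atTop (nhds ((1:ℝ)/4)) := by
      have heq : (1:ℝ)/4 = 1/2 - 1/4 := by norm_num
      rw [heq]
      exact Filter.Tendsto.sub tendsto_const_nhds hb
    exact ha.prodMk_nhds (hb.prodMk_nhds (hb.prodMk_nhds ha))
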